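/- Each of the explicit rotation matrices R_{T_0'}^{f_0}, R_{T_1'}^{f_1}, R_{T_2'}^{f_2}, R_{T_3'}^{f_3} of the 5-BC helix construction is a special orthogonal matrix (element of SO(3)) and has trace equal to (5 + 3√5)/4 = 1 + 2·cos β, where β = arccos((3φ − 1)/4) and φ = (1+√5)/2. Hence each is a rotation through the angle β = arccos((3φ − 1)/4). -/

import Mathlib

open Matrix

noncomputable section

noncomputable def R5 : Fin 4 → Matrix (Fin 3) (Fin 3) ℝ :=
  ![!![(1 + 3*Real.sqrt 5)/8, Real.sqrt ((3/2)*(3 - Real.sqrt 5))/4, 0;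
    -(Real.sqrt ((3/2)*(3 - Real.sqrt 5))/4), (1 + 3*Real.sqrt 5)/8, 0;
    0, 0, 1],
  !![(38 + 15*Real.sqrt 5)/72, Real.sqrt (287 - 380*Real.sqrt 5/3)/24, 1/(9*Real.sqrt 2);
    -(Real.sqrt (83 - 104*Real.sqrt 5/3)/24), 1/2 + 5*Real.sqrt 5/24, Real.sqrt (14 - 16*Real.sqrt 5/3)/6;
    (-23 + 9*Real.sqrt 5)/(36*Real.sqrt 2), -((5 + Real.sqrt 5)/(12*Real.sqrt 6)), (2 + 3*Real.sqrt 5)/9],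
  !![(65 + 33*Real.sqrt 5)/144, -((-19 + Real.sqrt 5)/(48*Real.sqrt 3)), (29 - 9*Real.sqrt 5)/(36*Real.sqrt 2);
    (-41 + 11*Real.sqrt 5)/(48*Real.sqrt 3), (9 + 17*Real.sqrt 5)/48, -((-1 + Real.sqrt 5)/(12*Real.sqrt 6));
    (11 - 9*Real.sqrt 5)/(36*Real.sqrt 2), 1/(6*Real.sqrt (369 + 165*Real.sqrt 5)), (11 + 3*Real.sqrt 5)/18],
  !![5/36 + 3*Real.sqrt 5/8, (13 - 2*Real.sqrt 5)/(24*Real.sqrt 3), (-8 + 3*Real.sqrt 5)/(18*Real.sqrt 2);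
    (-17 + 4*Real.sqrt 5)/(24*Real.sqrt 3), 1/2 + 5*Real.sqrt 5/24, (7 - 2*Real.sqrt 5)/(6*Real.sqrt 6);
    Real.sqrt (83 - 33*Real.sqrt 5)/36, (11 - 7*Real.sqrt 5)/(12*Real.sqrt 6), (11 + 3*Real.sqrt 5)/18]]

/-!
Every entry of `R5 k` lies in `ℚ(√2, √3, √5)`: the nested radicals denest, e.g.
`√(287 - 380√5/3) = (10√5 - 19)√3/3`, and the denominators rationalise. Orthogonality, the
determinant and the trace then become polynomial identities in `√2, √3, √5`, which vanish modulo
`√2² = 2`, `√3² = 3`, `√5² = 5`. The angle is read off from `cos (arccos x) = x`, valid because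
`x = (1 + 3√5)/8` lies in `[-1, 1]`.
-/

open Real

lemma sqrt_eq_of_sq_eq {x y : ℝ} (hy : 0 ≤ y) (h : y ^ 2 = x) : √x = y :=
  h ▸ sqrt_sq hy

lemma div_mul_sqrt (x c m : ℝ) : x / (c * √m) = x * √m / (c * m) := by
  rcases le_or_gt m 0 with hm | hm
  · simp [sqrt_eq_zero_of_nonpos hm]
  · conv_rhs => rw [← div_sqrt]
    field_simp

lemma sqrt_six : √6 = √2 * √3 := by
  rw [← sqrt_mul] <;> norm_num

lemma two_lt_sqrt_five : 2 < √5 := by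
  rw [lt_sqrt] <;> norm_num

lemma sqrt_five_lt : √5 < 9 / 4 := by
  rw [sqrt_lt'] <;> norm_num

lemma sqrt_three_halves_mul_three_sub_sqrt_five :
    √((3 / 2) * (3 - √5)) = (√5 - 1) * √3 / 2 := by
  refine sqrt_eq_of_sq_eq ?_ (by grind [sq_sqrt])
  have := two_lt_sqrt_five
  exact div_nonneg (mul_nonneg (by linarith) (sqrt_nonneg 3)) zero_le_two

lemma sqrt_287_sub_sqrt_five : √(287 - 380 * √5 / 3) = (10 * √5 - 19) * √3 / 3 := by
  refine sqrt_eq_of_sq_eq ?_ (by grind [sq_sqrt])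
  have := two_lt_sqrt_five
  exact div_nonneg (mul_nonneg (by linarith) (sqrt_nonneg 3)) zero_le_three

lemma sqrt_83_sub_104_sqrt_five : √(83 - 104 * √5 / 3) = (13 - 4 * √5) * √3 / 3 := by
  refine sqrt_eq_of_sq_eq ?_ (by grind [sq_sqrt])
  have := sqrt_five_lt
  exact div_nonneg (mul_nonneg (by linarith) (sqrt_nonneg 3)) zero_le_three

lemma sqrt_83_sub_33_sqrt_five : √(83 - 33 * √5) = (11 - 3 * √5) * √2 / 2 := by
  refine sqrt_eq_of_sq_eq ?_ (by grind [sq_sqrt])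
  have := sqrt_five_lt
  exact div_nonneg (mul_nonneg (by linarith) (sqrt_nonneg 2)) zero_le_two

lemma sqrt_14_sub_sqrt_five : √(14 - 16 * √5 / 3) = (4 - √5) * √6 / 3 := by
  refine sqrt_eq_of_sq_eq ?_ (by grind [sq_sqrt])
  have := sqrt_five_lt
  exact div_nonneg (mul_nonneg (by linarith) (sqrt_nonneg 6)) zero_le_three

lemma sqrt_369_add_sqrt_five : √(369 + 165 * √5) = (11 + 5 * √5) * √6 / 2 :=
  sqrt_eq_of_sq_eq (by positivity) (by grind [sq_sqrt])

-- `(11 + 5√5)(5√5 - 11) = 4` rationalises the denominator.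
lemma one_div_six_mul_sqrt_369_add_sqrt_five :
    1 / (6 * √(369 + 165 * √5)) = (5 * √5 - 11) * √6 / 72 := by
  rw [sqrt_369_add_sqrt_five, div_eq_div_iff (by positivity) (by norm_num)]
  grind [sq_sqrt]

lemma R5_mem_specialOrthogonalGroup (k : Fin 4) :
    R5 k ∈ specialOrthogonalGroup (Fin 3) ℝ := by
  have h2 : √2 ^ 2 = 2 := sq_sqrt zero_le_two
  have h3 : √3 ^ 2 = 3 := sq_sqrt zero_le_three
  have h5 : √5 ^ 2 = 5 := sq_sqrt (by norm_num)
  have h6 : √6 = √2 * √3 := sqrt_six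
  rw [mem_specialOrthogonalGroup_iff, mem_orthogonalGroup_iff']
  -- the `1 / (6 * √(369 + 165√5))` entry must be rewritten before `div_mul_sqrt` reaches it
  fin_cases k <;>
  · simp only [R5, Fin.zero_eta, Fin.mk_one, Fin.reduceFinMk, cons_val,
      one_div_six_mul_sqrt_369_add_sqrt_five]
    simp only [sqrt_three_halves_mul_three_sub_sqrt_five, sqrt_287_sub_sqrt_five,
      sqrt_83_sub_104_sqrt_five, sqrt_83_sub_33_sqrt_five, sqrt_14_sub_sqrt_five, div_mul_sqrt]
    constructor
    · ext i j
      fin_cases i <;> fin_cases j <;>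
      · simp only [mul_apply, Fin.sum_univ_three, transpose_apply, of_apply, cons_val', cons_val,
          cons_val_zero, cons_val_one, cons_val_fin_one, one_apply_eq, one_apply_ne, ne_eq,
          Fin.reduceEq, Fin.zero_eta, Fin.mk_one, Fin.reduceFinMk, Fin.isValue, not_false_eq_true]
        grind
    · simp only [det_fin_three, of_apply, cons_val', cons_val, cons_val_zero, cons_val_one,
        cons_val_fin_one, Fin.isValue]
      grind

lemma R5_trace (k : Fin 4) : (R5 k).trace = (5 + 3 * √5) / 4 := by
  fin_cases k <;>
  · simp only [R5, trace_fin_three, of_apply, cons_val', cons_val, cons_val_zero, cons_val_one,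
      cons_val_fin_one, Fin.zero_eta, Fin.mk_one, Fin.reduceFinMk, Fin.isValue]
    ring

lemma one_add_two_mul_cos_arccos_goldenRatio :
    1 + 2 * cos (arccos ((3 * goldenRatio - 1) / 4)) = (5 + 3 * √5) / 4 := by
  have hφ : goldenRatio = (1 + √5) / 2 := rfl
  have := sqrt_five_lt
  rw [hφ, cos_arccos (by linarith [sqrt_nonneg 5]) (by linarith)]
  ring

theorem fiveBC_rotations_SO3_trace :
    ∀ k : Fin 4,
      (R5 k)ᵀ * R5 k = 1 ∧ (R5 k).det = 1 ∧
      (R5 k).trace = (5 + 3*Real.sqrt 5)/4 ∧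
      (5 + 3*Real.sqrt 5)/4 =
        1 + 2 * Real.cos (Real.arccos ((3*((1 + Real.sqrt 5)/2) - 1)/4)) := by
  intro k
  obtain ⟨hR, hdet⟩ := mem_specialOrthogonalGroup_iff.1 (R5_mem_specialOrthogonalGroup k)
  exact ⟨(mem_orthogonalGroup_iff' _ _).1 hR, hdet, R5_trace k,
    one_add_two_mul_cos_arccos_goldenRatio.symm⟩
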